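/- Let a¹², a²¹, a²² be real numbers with a²² < 0, a¹²a²¹ < 0, and 4a¹²a²¹ + (a²²)² > 0. Then the two values r_± := ( 2a¹²a²¹ + a²²( a²² ± √(4a¹²a²¹ + (a²²)²) ) ) / ( 2(a²¹)² ) are both strictly positive, and the single-step sensory capacity attains its maximal value one there: C̄_Y(r_+) = C̄_Y(r_−) = 1, where C̄_Y(r) = 4(a²²)² r (a²¹ r − a¹²)² / ( (a¹²)² − 2a¹²a²¹ r + r((a²²)² + (a²¹)² r) )²; moreover C̄_Y(r) ≤ 1 for all r > 0. (Optimal s-SC in the first parameter case of Sec. IV.) -/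

import Mathlib

/-!
With `u = (a²¹r - a¹²)²` and `v = (a²²)²r` the denominator of `C̄_Y(r)` is `(u + v)²`, so
`C̄_Y(r) = 4uv / (u + v)² ≤ 1` by AM-GM, with equality exactly when `u = v`. The equation
`u = v` is the quadratic `(a²¹)²r² - (2a¹²a²¹ + (a²²)²)r + (a¹²)² = 0`, whose roots are `r_±`.
Their numerators `N_± = 2a¹²a²¹ + (a²²)² ± a²²√(4a¹²a²¹ + (a²²)²)` have product `4(a¹²a²¹)² > 0`
and sum `2(2a¹²a²¹ + (a²²)²) > 0`, so both are positive.
-/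

/-- Steady-state single-step sensory capacity `C̄_Y` for the bipartite linear Langevin system
with `a¹¹ = 0`, as a function of the noise-intensity ratio `r = T^X / T^Y` (Eq. (A6)). -/
noncomputable def sCapY0 (a12 a21 a22 r : ℝ) : ℝ :=
  4 * a22 ^ 2 * r * (a21 * r - a12) ^ 2 /
    (a12 ^ 2 - 2 * a12 * a21 * r + r * (a22 ^ 2 + a21 ^ 2 * r)) ^ 2

theorem four_mul_mul_div_add_sq_le_one (u v : ℝ) : 4 * u * v / (u + v) ^ 2 ≤ 1 :=
  div_le_one_of_le₀ (by nlinarith [sq_nonneg (u - v)]) (sq_nonneg _)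

theorem four_mul_mul_self_div_add_self_sq {u : ℝ} (hu : u ≠ 0) :
    4 * u * u / (u + u) ^ 2 = 1 := by
  field_simp
  ring

theorem sCapY0_eq (a12 a21 a22 r : ℝ) :
    sCapY0 a12 a21 a22 r =
      4 * (a21 * r - a12) ^ 2 * (a22 ^ 2 * r) / ((a21 * r - a12) ^ 2 + a22 ^ 2 * r) ^ 2 := by
  rw [sCapY0]
  congr 1 <;> ring

theorem sCapY0_le_one (a12 a21 a22 r : ℝ) : sCapY0 a12 a21 a22 r ≤ 1 := by
  rw [sCapY0_eq]
  exact four_mul_mul_div_add_sq_le_one _ _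

theorem sCapY0_eq_one_of_sq_eq {a12 a21 a22 r : ℝ} (ha22 : a22 ≠ 0) (hr : r ≠ 0)
    (h : (a21 * r - a12) ^ 2 = a22 ^ 2 * r) : sCapY0 a12 a21 a22 r = 1 := by
  rw [sCapY0_eq, h]
  exact four_mul_mul_self_div_add_self_sq (mul_ne_zero (pow_ne_zero 2 ha22) hr)

section Roots

variable {a12 a21 a22 s : ℝ}

theorem sq_sub_eq_at_root (ha21 : a21 ≠ 0) (hs : s ^ 2 = 4 * a12 * a21 + a22 ^ 2) :
    (a21 * ((2 * a12 * a21 + a22 * (a22 + s)) / (2 * a21 ^ 2)) - a12) ^ 2 =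
      a22 ^ 2 * ((2 * a12 * a21 + a22 * (a22 + s)) / (2 * a21 ^ 2)) := by
  field_simp
  linear_combination a22 ^ 2 * hs

theorem root_numerator_pos (h1221 : a12 * a21 < 0) (hs : s ^ 2 = 4 * a12 * a21 + a22 ^ 2) :
    0 < 2 * a12 * a21 + a22 * (a22 + s) := by
  have hprod : (2 * a12 * a21 + a22 * (a22 + s)) * (2 * a12 * a21 + a22 * (a22 - s)) =
      4 * (a12 * a21) ^ 2 := by
    linear_combination -a22 ^ 2 * hs
  nlinarith [sq_nonneg s, mul_pos_of_neg_of_neg h1221 h1221]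

theorem root_pos (h1221 : a12 * a21 < 0) (hs : s ^ 2 = 4 * a12 * a21 + a22 ^ 2) :
    0 < (2 * a12 * a21 + a22 * (a22 + s)) / (2 * a21 ^ 2) := by
  have ha21 : a21 ≠ 0 := right_ne_zero_of_mul h1221.ne
  exact div_pos (root_numerator_pos h1221 hs) (by positivity)

theorem sCapY0_root_eq_one (h1221 : a12 * a21 < 0) (hs : s ^ 2 = 4 * a12 * a21 + a22 ^ 2) :
    sCapY0 a12 a21 a22 ((2 * a12 * a21 + a22 * (a22 + s)) / (2 * a21 ^ 2)) = 1 := by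
  have ha21 : a21 ≠ 0 := right_ne_zero_of_mul h1221.ne
  have ha22 : a22 ≠ 0 := by rintro rfl; nlinarith [sq_nonneg s]
  exact sCapY0_eq_one_of_sq_eq ha22 (root_pos h1221 hs).ne' (sq_sub_eq_at_root ha21 hs)

end Roots

theorem sCapY0_optimal_case_one_general (a12 a21 a22 : ℝ) (h1221 : a12 * a21 < 0)
    (hdisc : 4 * a12 * a21 + a22 ^ 2 > 0) :
    (0 < (2 * a12 * a21 + a22 * (a22 + Real.sqrt (4 * a12 * a21 + a22 ^ 2))) /
        (2 * a21 ^ 2)) ∧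
    (0 < (2 * a12 * a21 + a22 * (a22 - Real.sqrt (4 * a12 * a21 + a22 ^ 2))) /
        (2 * a21 ^ 2)) ∧
    sCapY0 a12 a21 a22
        ((2 * a12 * a21 + a22 * (a22 + Real.sqrt (4 * a12 * a21 + a22 ^ 2))) /
          (2 * a21 ^ 2)) = 1 ∧
    sCapY0 a12 a21 a22
        ((2 * a12 * a21 + a22 * (a22 - Real.sqrt (4 * a12 * a21 + a22 ^ 2))) /
          (2 * a21 ^ 2)) = 1 ∧
    ∀ r : ℝ, 0 < r → sCapY0 a12 a21 a22 r ≤ 1 := by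
  have hs : Real.sqrt (4 * a12 * a21 + a22 ^ 2) ^ 2 = 4 * a12 * a21 + a22 ^ 2 :=
    Real.sq_sqrt hdisc.le
  have hs' : (-Real.sqrt (4 * a12 * a21 + a22 ^ 2)) ^ 2 = 4 * a12 * a21 + a22 ^ 2 := by
    rw [neg_sq, hs]
  simp only [sub_eq_add_neg a22]
  exact ⟨root_pos h1221 hs, root_pos h1221 hs', sCapY0_root_eq_one h1221 hs,
    sCapY0_root_eq_one h1221 hs', fun r _ => sCapY0_le_one a12 a21 a22 r⟩

/-- Optimal single-step sensory capacity in the first parameter case of Sec. IV: if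
`4a¹²a²¹ + (a²²)² > 0` (together with the stability conditions with `a¹¹ = 0`), then the two
noise-intensity ratios `r_± = (2a¹²a²¹ + a²²(a²² ± √(4a¹²a²¹ + (a²²)²)))/(2(a²¹)²)` are both
strictly positive, `C̄_Y(r_+) = C̄_Y(r_−) = 1`, and `C̄_Y(r) ≤ 1` for all `r > 0`. -/
theorem sCapY0_optimal_case_one (a12 a21 a22 : ℝ) (h22 : a22 < 0) (h1221 : a12 * a21 < 0)
    (hdisc : 4 * a12 * a21 + a22 ^ 2 > 0) :
    (0 < (2 * a12 * a21 + a22 * (a22 + Real.sqrt (4 * a12 * a21 + a22 ^ 2))) /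
        (2 * a21 ^ 2)) ∧
    (0 < (2 * a12 * a21 + a22 * (a22 - Real.sqrt (4 * a12 * a21 + a22 ^ 2))) /
        (2 * a21 ^ 2)) ∧
    sCapY0 a12 a21 a22
        ((2 * a12 * a21 + a22 * (a22 + Real.sqrt (4 * a12 * a21 + a22 ^ 2))) /
          (2 * a21 ^ 2)) = 1 ∧
    sCapY0 a12 a21 a22
        ((2 * a12 * a21 + a22 * (a22 - Real.sqrt (4 * a12 * a21 + a22 ^ 2))) /
          (2 * a21 ^ 2)) = 1 ∧
    ∀ r : ℝ, 0 < r → sCapY0 a12 a21 a22 r ≤ 1 :=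
  sCapY0_optimal_case_one_general a12 a21 a22 h1221 hdisc
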